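/- ((Norm-Choice) case of the backtracking theorem) Suppose the (Norm-Choice) rule is applied with root r of expression e: G,S : e ⇓ G₁,S₁ : ?(x,y), and G₁[r↦FWD(x)], ⟨r_?, FWD(y) | S₁⟩ : x ⇓_N G₂,S₂ : v. If backtracking restores each premise up to unreachable bindings, then there exists n such that G₂,S₂ ⇓_B^n G ∪ G_u, S for some set G_u of unreachable bindings created during the evaluation. -/

import Mathlib

/-! # The RICE execution model for Curry

Formalization of the syntax of (restricted) FlatCurry, the graph/heap
representation, the evaluation relations of the RICE execution model
(head-normal-form evaluation `EvalE`/`EvalS`/`EvalB`, normal-form evaluation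
`EvalN`, backtracking `BStep`/`BStepN` and backtrack-to-choice `BQStep`),
and the natural semantics of Curry (`NatEval`). -/

abbrev Var := ℕ
abbrev FunName := ℕ
abbrev ConName := ℕ
abbrev Lit := ℕ

/-- Patterns of case branches. -/
inductive Pat where
  | con : ConName → List Var → Pat
  | lit : Lit → Pat

/-- Restricted FlatCurry (return) expressions: all applications are to variables. -/
inductive Exp where
  | var (x : Var)
  | lit (l : Lit)
  | bot
  | choice (x y : Var)
  | free
  | fapp (f : FunName) (args : List Var)
  | capp (c : ConName) (args : List Var)
  | papp (x : Var) (args : List Var)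

/-- Restricted FlatCurry statements: a sequence of lets followed by an expression. -/
inductive Stmt where
  | slet (binds : List (Var × Exp)) (body : Stmt)
  | ret (e : Exp)

/-- Restricted FlatCurry blocks: at most one case, scrutinizing a variable. -/
inductive Block where
  | scase (x : Var) (branches : List (Pat × Stmt))
  | stmt (s : Stmt)

/-- Simultaneous renaming determined by the lists `xs` (domain) and `ys` (range). -/
def sub (xs ys : List Var) (v : Var) : Var :=
  (((xs.zip ys).find? (fun p => p.1 == v)).map Prod.snd).getD v

def Pat.rename (ρ : Var → Var) : Pat → Pat
  | .con c xs => .con c (xs.map ρ)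
  | .lit l => .lit l

def Exp.rename (ρ : Var → Var) : Exp → Exp
  | .var x => .var (ρ x)
  | .lit l => .lit l
  | .bot => .bot
  | .choice x y => .choice (ρ x) (ρ y)
  | .free => .free
  | .fapp f xs => .fapp f (xs.map ρ)
  | .capp c xs => .capp c (xs.map ρ)
  | .papp x xs => .papp (ρ x) (xs.map ρ)

def Stmt.rename (ρ : Var → Var) : Stmt → Stmt
  | .slet binds body => .slet (binds.map fun p => (ρ p.1, p.2.rename ρ)) (body.rename ρ)
  | .ret e => .ret (e.rename ρ)

def Block.rename (ρ : Var → Var) : Block → Block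
  | .scase x br => .scase (ρ x) (br.map fun p => (p.1.rename ρ, p.2.rename ρ))
  | .stmt s => .stmt (s.rename ρ)

/-- The variables occurring in an expression. -/
def Exp.fv : Exp → List Var
  | .var x => [x]
  | .lit _ => []
  | .bot => []
  | .choice x y => [x, y]
  | .free => []
  | .fapp _ xs => xs
  | .capp _ xs => xs
  | .papp x xs => x :: xs

def Stmt.fv : Stmt → List Var
  | .slet binds body => binds.flatMap (fun p => p.2.fv) ++ body.fv
  | .ret e => e.fv

def Block.fv : Block → List Var
  | .scase x br => x :: br.flatMap (fun p => p.2.fv)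
  | .stmt s => s.fv

/-- CurryGraph (heap) nodes of the RICE runtime. -/
inductive GNode where
  | bot
  | free
  | lit (l : Lit)
  | choice (x y : Var)
  | fapp (f : FunName) (args : List Var)
  | capp (c : ConName) (args : List Var)
  | fwd (x : Var)
  | part (f : FunName) (missing : ℕ) (args : List Var)
  | applyn (x : Var) (args : List Var)

/-- The expression graph: a partial map from node names to nodes. -/
abbrev CurryGraph := Var → Option GNode

/-- Update (or add) the binding of node `x`. -/
def gupd (G : CurryGraph) (x : Var) (n : GNode) : CurryGraph := Function.update G x (some n)

/-- Perform a list of updates, leftmost first. -/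
def gupds (G : CurryGraph) (fs : List (Var × GNode)) : CurryGraph :=
  fs.foldl (fun g p => gupd g p.1 p.2) G

/-- The children (successor nodes) of a graph node. -/
def GNode.children : GNode → List Var
  | .bot => []
  | .free => []
  | .lit _ => []
  | .choice x y => [x, y]
  | .fapp _ xs => xs
  | .capp _ xs => xs
  | .fwd x => [x]
  | .part _ _ xs => xs
  | .applyn x xs => x :: xs

/-- The edge relation of a graph. -/
def GEdge (G : CurryGraph) (x y : Var) : Prop := ∃ n, G x = some n ∧ y ∈ n.children

/-- Reachability in a graph. -/
def Reach (G : CurryGraph) : Var → Var → Prop := Relation.ReflTransGen (GEdge G)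

/-- Disjoint union of graphs (left-biased; intended for disjoint domains). -/
def GUnion (G Gu : CurryGraph) : CurryGraph := fun x => (G x).or (Gu x)

/-- `Gu` consists only of bindings that are new with respect to `G`. -/
def UnreachNew (G Gu : CurryGraph) : Prop := ∀ x, Gu x ≠ none → G x = none

/-- A frame of the backtracking stack: a node, the node value to restore upon
backtracking, and a flag marking frames that come from a choice. -/
structure Frame where
  node : Var
  restore : GNode
  fromChoice : Bool

abbrev Stack := List Frame

/-- Conversion of a (flat) restricted FlatCurry expression to a graph node,
used by the (Let) rule. -/
def expToNode : Exp → GNode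
  | .var x => .fwd x
  | .lit l => .lit l
  | .bot => .bot
  | .choice x y => .choice x y
  | .free => .free
  | .fapp f xs => .fapp f xs
  | .capp c xs => .capp c xs
  | .papp x xs => .applyn x xs

/-- A program maps function names to their parameter list and body. -/
abbrev Program := FunName → Option (List Var × Block)

mutual
/-- `EvalE P G S e G' S' v`: evaluation of a restricted FlatCurry (return)
expression to head normal form, rules (Bot), (Lit), (Free), (Con), (Choice),
(Var), (Fun) and the Apply rules of the RICE execution model. -/
inductive EvalE (P : Program) : CurryGraph → Stack → Exp → CurryGraph → Stack → GNode → Prop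
  | bot {G S} : EvalE P G S .bot G S .bot
  | lit {G S l} : EvalE P G S (.lit l) G S (.lit l)
  | free {G S} : EvalE P G S .free G S .free
  | con {G S c xs} : EvalE P G S (.capp c xs) G S (.capp c xs)
  | choice {G S x y} : EvalE P G S (.choice x y) G S (.choice x y)
  | var {G S x} : EvalE P G S (.var x) G S (.fwd x)
  | fn {G S f ys xs b G₁ S₁ v} :
      P f = some (xs, b) → xs.length = ys.length →
      EvalB P G S (b.rename (sub xs ys)) G₁ S₁ v →
      EvalE P G S (.fapp f ys) G₁ S₁ v
  | applyFree {G S x es} : G x = some .free →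
      EvalE P G S (.papp x es) G S .bot
  | applyChoice {G S x y z es G₁ S₁ v} : G x = some (.choice y z) →
      EvalE P (gupd G x (.fwd y)) (⟨x, .fwd z, true⟩ :: S) (.papp y es) G₁ S₁ v →
      EvalE P G S (.papp x es) G₁ S₁ v
  | applyPart {G S x f k ys es G₁ S₁ v} : G x = some (.part f k ys) →
      EvalApp P G S (.part f k ys) es G₁ S₁ v →
      EvalE P G S (.papp x es) G₁ S₁ v

/-- Application of a head-normal (partial application) node to further
arguments: rules (Apply-Under), (Apply-Full) and (Apply-Over). -/
inductive EvalApp (P : Program) : CurryGraph → Stack → GNode → List Var → CurryGraph → Stack → GNode → Prop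
  | under {G S f k ys es} : es.length < k →
      EvalApp P G S (.part f k ys) es G S (.part f (k - es.length) (ys ++ es))
  | full {G S f k ys es G₁ S₁ v} : es.length = k →
      EvalE P G S (.fapp f (ys ++ es)) G₁ S₁ v →
      EvalApp P G S (.part f k ys) es G₁ S₁ v
  | over {G S f k ys ek erest G₁ S₁ v₁ G₂ S₂ v₂} : ek.length = k → erest ≠ [] →
      EvalE P G S (.fapp f (ys ++ ek)) G₁ S₁ v₁ →
      EvalApp P G₁ S₁ v₁ erest G₂ S₂ v₂ →
      EvalApp P G S (.part f k ys) (ek ++ erest) G₂ S₂ v₂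

/-- Evaluation of statements: the (Let) rule, which adds fresh bindings to the
graph, and evaluation of a return expression. -/
inductive EvalS (P : Program) : CurryGraph → Stack → Stmt → CurryGraph → Stack → GNode → Prop
  | ret {G S e G₁ S₁ v} : EvalE P G S e G₁ S₁ v → EvalS P G S (.ret e) G₁ S₁ v
  | slet {G S binds body G₁ S₁ v} :
      (∀ p ∈ binds, G p.1 = none) → (binds.map Prod.fst).Nodup →
      EvalS P (gupds G (binds.map fun p => (p.1, expToNode p.2))) S body G₁ S₁ v →
      EvalS P G S (.slet binds body) G₁ S₁ v

/-- Evaluation of blocks: the Case rules of the RICE execution model. -/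
inductive EvalB (P : Program) : CurryGraph → Stack → Block → CurryGraph → Stack → GNode → Prop
  | stmt {G S s G₁ S₁ v} : EvalS P G S s G₁ S₁ v → EvalB P G S (.stmt s) G₁ S₁ v
  | caseBot {G S x br} : G x = some .bot →
      EvalB P G S (.scase x br) G S .bot
  | caseFwd {G S x y br G₁ S₁ v} : G x = some (.fwd y) →
      EvalB P G S (.scase y br) G₁ S₁ v →
      EvalB P G S (.scase x br) G₁ S₁ v
  | caseFun {G S x f ys br G₁ S₁ vx G₂ S₂ v} : G x = some (.fapp f ys) →
      EvalE P G S (.fapp f ys) G₁ S₁ vx →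
      EvalB P (gupd G₁ x vx) (⟨x, .fapp f ys, false⟩ :: S₁) (.scase x br) G₂ S₂ v →
      EvalB P G S (.scase x br) G₂ S₂ v
  | caseChoice {G S x y z br G₁ S₁ v} : G x = some (.choice y z) →
      EvalB P (gupd G x (.fwd y)) (⟨x, .fwd z, true⟩ :: S) (.scase y br) G₁ S₁ v →
      EvalB P G S (.scase x br) G₁ S₁ v
  | caseLit {G S x l br s G₁ S₁ v} : G x = some (.lit l) →
      (Pat.lit l, s) ∈ br →
      EvalS P G S s G₁ S₁ v →
      EvalB P G S (.scase x br) G₁ S₁ v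
  | caseCon {G S x c zs ys br s G₁ S₁ v} : G x = some (.capp c zs) →
      (Pat.con c ys, s) ∈ br → ys.length = zs.length →
      EvalS P G S (s.rename (sub ys zs)) G₁ S₁ v →
      EvalB P G S (.scase x br) G₁ S₁ v
  | caseLitFree {G S x br l₁ ls s₁ ss G₁ S₁ v} : G x = some .free →
      br = List.zipWith (fun l s => (Pat.lit l, s)) (l₁ :: ls) (s₁ :: ss) →
      EvalS P (gupd G x (.lit l₁))
        (ls.map (fun l => ⟨x, GNode.lit l, false⟩) ++ ⟨x, .free, false⟩ :: S)
        s₁ G₁ S₁ v →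
      EvalB P G S (.scase x br) G₁ S₁ v
  | caseConFree {G S x br c₁ ys₁ cs s₁ ss ws wss G₁ S₁ v} : G x = some .free →
      br = List.zipWith (fun (ci : ConName × List Var) s => (Pat.con ci.1 ci.2, s))
             ((c₁, ys₁) :: cs) (s₁ :: ss) →
      ws.length = ys₁.length →
      List.Forall₂ (fun (ci : ConName × List Var) (w : List Var) => w.length = ci.2.length) cs wss →
      (∀ w ∈ (ws :: wss).flatten, G w = none) →
      ((ws :: wss).flatten).Nodup →
      EvalS P
        (gupd ((ws :: wss).flatten.foldl (fun g w => gupd g w .free) G) x (.capp c₁ ws))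
        (List.zipWith (fun (ci : ConName × List Var) w => Frame.mk x (.capp ci.1 w) false) cs wss
          ++ ⟨x, .free, false⟩ :: S)
        (s₁.rename (sub ys₁ ws)) G₁ S₁ v →
      EvalB P G S (.scase x br) G₁ S₁ v
end

/-- Values of evaluation to normal form. -/
inductive NVal where
  | bot
  | lit (l : Lit)
  | free
  | con (c : ConName) (args : List NVal)
  | fwd (v : NVal)

mutual
/-- `EvalN P G S e G' S' v`: evaluation of an expression to normal form,
rules (Norm-Bot), (Norm-Lit), (Norm-Free), (Norm-Con) and (Norm-Choice). -/
inductive EvalN (P : Program) : CurryGraph → Stack → Exp → CurryGraph → Stack → NVal → Prop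
  | nbot {G S e G₁ S₁} : EvalE P G S e G₁ S₁ .bot → EvalN P G S e G₁ S₁ .bot
  | nlit {G S e G₁ S₁ l} : EvalE P G S e G₁ S₁ (.lit l) → EvalN P G S e G₁ S₁ (.lit l)
  | nfree {G S e G₁ S₁} : EvalE P G S e G₁ S₁ .free → EvalN P G S e G₁ S₁ .free
  | ncon {G S e G₀ S₀ c xs G₁ S₁ vs} :
      EvalE P G S e G₀ S₀ (.capp c xs) →
      NormList P G₀ S₀ xs G₁ S₁ vs →
      EvalN P G S e G₁ S₁ (.con c vs)
  | nfwd {G S e G₀ S₀ x G₁ S₁ v} :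
      EvalE P G S e G₀ S₀ (.fwd x) →
      NormVar P G₀ S₀ x G₁ S₁ v →
      EvalN P G S e G₁ S₁ (.fwd v)
  | nchoice {G S e G₁ S₁ x y r G₂ S₂ v} :
      EvalE P G S e G₁ S₁ (.choice x y) →
      G₁ r = some (.choice x y) →
      NormVar P (gupd G₁ r (.fwd x)) (⟨r, .fwd y, true⟩ :: S₁) x G₂ S₂ v →
      EvalN P G S e G₂ S₂ (.fwd v)

/-- Normalization of the node bound to a variable. -/
inductive NormVar (P : Program) : CurryGraph → Stack → Var → CurryGraph → Stack → NVal → Prop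
  | bot {G S x} : G x = some .bot → NormVar P G S x G S .bot
  | lit {G S x l} : G x = some (.lit l) → NormVar P G S x G S (.lit l)
  | free {G S x} : G x = some .free → NormVar P G S x G S .free
  | fwd {G S x y G₁ S₁ v} : G x = some (.fwd y) →
      NormVar P G S y G₁ S₁ v → NormVar P G S x G₁ S₁ (.fwd v)
  | con {G S x c ys G₁ S₁ vs} : G x = some (.capp c ys) →
      NormList P G S ys G₁ S₁ vs → NormVar P G S x G₁ S₁ (.con c vs)
  | choice {G S x y z G₁ S₁ v} : G x = some (.choice y z) →
      NormVar P (gupd G x (.fwd y)) (⟨x, .fwd z, true⟩ :: S) y G₁ S₁ v →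
      NormVar P G S x G₁ S₁ (.fwd v)
  | fn {G S x f ys G₁ S₁ w G₂ S₂ v} : G x = some (.fapp f ys) →
      EvalE P G S (.fapp f ys) G₁ S₁ w →
      NormVar P (gupd G₁ x w) (⟨x, .fapp f ys, false⟩ :: S₁) x G₂ S₂ v →
      NormVar P G S x G₂ S₂ v

/-- Normalization of a list of (constructor children) nodes, left to right. -/
inductive NormList (P : Program) : CurryGraph → Stack → List Var → CurryGraph → Stack → List NVal → Prop
  | nil {G S} : NormList P G S [] G S []
  | cons {G S x xs G₁ S₁ v G₂ S₂ vs} :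
      NormVar P G S x G₁ S₁ v →
      NormList P G₁ S₁ xs G₂ S₂ vs →
      NormList P G S (x :: xs) G₂ S₂ (v :: vs)
end

/-- The single-step backtracking relation (BT): pop one frame and undo its
rewrite; popping a choice frame switches to the right alternative and pushes
a frame restoring the choice itself. -/
inductive BStep : CurryGraph → Stack → CurryGraph → Stack → Prop
  | det {G x n S} : BStep G (⟨x, n, false⟩ :: S) (gupd G x n) S
  | choice {G x y z S} : G x = some (.fwd y) →
      BStep G (⟨x, .fwd z, true⟩ :: S) (gupd G x (.fwd z)) (⟨x, .choice y z, false⟩ :: S)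

/-- `BStepN n`: the `n`-fold composition of the backtracking relation. -/
def BStepN : ℕ → CurryGraph → Stack → CurryGraph → Stack → Prop
  | 0, G, S, G', S' => G' = G ∧ S' = S
  | n + 1, G, S, G', S' => ∃ G₁ S₁, BStep G S G₁ S₁ ∧ BStepN n G₁ S₁ G' S'

/-- The backtrack-to-choice relation (BT-Choice): undo all deterministic
rewrites above the topmost choice frame and switch the choice. -/
inductive BQStep : CurryGraph → Stack → CurryGraph → Stack → Prop
  | mk {G : CurryGraph} {fs : List (Var × GNode)} {x y z : Var} {S : Stack} :
      gupds G fs x = some (.fwd y) →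
      BQStep G (fs.map (fun p => ⟨p.1, p.2, false⟩) ++ ⟨x, .fwd z, true⟩ :: S)
             (gupd (gupds G fs) x (.fwd z)) (⟨x, .choice y z, false⟩ :: S)
/-! ## FlatCurry and the natural semantics of Curry -/

/-- (Unrestricted) FlatCurry expressions. -/
inductive FExpr where
  | var (x : Var)
  | lit (l : Lit)
  | bot
  | choice (e₁ e₂ : FExpr)
  | fapp (f : FunName) (args : List FExpr)
  | capp (c : ConName) (args : List FExpr)
  | flet (binds : List (Var × FExpr)) (body : FExpr)
  | ffree (xs : List Var) (body : FExpr)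
  | fcase (scrut : FExpr) (branches : List (Pat × FExpr))

mutual
def FExpr.rename (ρ : Var → Var) : FExpr → FExpr
  | .var x => .var (ρ x)
  | .lit l => .lit l
  | .bot => .bot
  | .choice e₁ e₂ => .choice (e₁.rename ρ) (e₂.rename ρ)
  | .fapp f args => .fapp f (FExpr.renameL ρ args)
  | .capp c args => .capp c (FExpr.renameL ρ args)
  | .flet binds body => .flet (FExpr.renameB ρ binds) (body.rename ρ)
  | .ffree xs body => .ffree (xs.map ρ) (body.rename ρ)
  | .fcase e br => .fcase (e.rename ρ) (FExpr.renameBr ρ br)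

def FExpr.renameL (ρ : Var → Var) : List FExpr → List FExpr
  | [] => []
  | e :: es => e.rename ρ :: FExpr.renameL ρ es

def FExpr.renameB (ρ : Var → Var) : List (Var × FExpr) → List (Var × FExpr)
  | [] => []
  | (x, e) :: bs => (ρ x, e.rename ρ) :: FExpr.renameB ρ bs

def FExpr.renameBr (ρ : Var → Var) : List (Pat × FExpr) → List (Pat × FExpr)
  | [] => []
  | (p, e) :: bs => (p.rename ρ, e.rename ρ) :: FExpr.renameBr ρ bs
end

/-- A heap maps variables to FlatCurry expressions; a free variable is a
variable mapped to itself. -/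
abbrev Heap := Var → Option FExpr

def hupd (Γ : Heap) (x : Var) (e : FExpr) : Heap := Function.update Γ x (some e)

def hupds (Γ : Heap) (bs : List (Var × FExpr)) : Heap :=
  bs.foldl (fun h p => hupd h p.1 p.2) Γ

/-- Head normal forms of the natural semantics: constructor-rooted
expressions, literals, and free variables. -/
def IsHNF (Γ : Heap) : FExpr → Prop
  | .capp _ _ => True
  | .lit _ => True
  | .var x => Γ x = some (.var x)
  | _ => False

/-- A FlatCurry program. -/
abbrev NProgram := FunName → Option (List Var × FExpr)

/-- The natural (big-step) semantics of Curry (Albert et al.):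
`NatEval NP Γ e Δ v` is `Γ : e ⇓_C Δ : v`. -/
inductive NatEval (NP : NProgram) : Heap → FExpr → Heap → FExpr → Prop
  | varCons {Γ x t} : Γ x = some t → IsHNF Γ t →
      NatEval NP Γ (.var x) Γ t
  | varExp {Γ x e Δ v} : Γ x = some e → ¬ IsHNF Γ e →
      NatEval NP Γ e Δ v →
      NatEval NP Γ (.var x) (hupd Δ x v) v
  | val {Γ v} : IsHNF Γ v → NatEval NP Γ v Γ v
  | fn {Γ f xs e ys Δ v} : NP f = some (xs, e) → xs.length = ys.length →
      NatEval NP Γ (e.rename (sub xs ys)) Δ v →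
      NatEval NP Γ (.fapp f (ys.map .var)) Δ v
  | hlet {Γ binds body ys Δ v} :
      (∀ y ∈ ys, Γ y = none) → ys.Nodup → ys.length = binds.length →
      NatEval NP
        (hupds Γ (ys.zip (binds.map fun b => b.2.rename (sub (binds.map Prod.fst) ys))))
        (body.rename (sub (binds.map Prod.fst) ys)) Δ v →
      NatEval NP Γ (.flet binds body) Δ v
  | freeDecl {Γ xs body ys Δ v} :
      (∀ y ∈ ys, Γ y = none) → ys.Nodup → ys.length = xs.length →
      NatEval NP (ys.foldl (fun h y => hupd h y (.var y)) Γ)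
        (body.rename (sub xs ys)) Δ v →
      NatEval NP Γ (.ffree xs body) Δ v
  | orL {Γ e₁ e₂ Δ v} : NatEval NP Γ e₁ Δ v →
      NatEval NP Γ (.choice e₁ e₂) Δ v
  | orR {Γ e₁ e₂ Δ v} : NatEval NP Γ e₂ Δ v →
      NatEval NP Γ (.choice e₁ e₂) Δ v
  | select {Γ e Δ c zs br ys eᵢ Θ v} :
      NatEval NP Γ e Δ (.capp c (zs.map .var)) →
      (Pat.con c ys, eᵢ) ∈ br → ys.length = zs.length →
      NatEval NP Δ (eᵢ.rename (sub ys zs)) Θ v →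
      NatEval NP Γ (.fcase e br) Θ v
  | selectLit {Γ e Δ l br eᵢ Θ v} :
      NatEval NP Γ e Δ (.lit l) →
      (Pat.lit l, eᵢ) ∈ br →
      NatEval NP Δ eᵢ Θ v →
      NatEval NP Γ (.fcase e br) Θ v
  | guess {Γ e Δ x c ys eᵢ br zs Θ v} :
      NatEval NP Γ e Δ (.var x) → Δ x = some (.var x) →
      (Pat.con c ys, eᵢ) ∈ br →
      zs.length = ys.length → (∀ z ∈ zs, Δ z = none) → zs.Nodup →
      NatEval NP
        (hupd (hupds Δ (zs.map fun z => (z, FExpr.var z))) x (.capp c (zs.map .var)))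
        (eᵢ.rename (sub ys zs)) Θ v →
      NatEval NP Γ (.fcase e br) Θ v
  | guessLit {Γ e Δ x l eᵢ br Θ v} :
      NatEval NP Γ e Δ (.var x) → Δ x = some (.var x) →
      (Pat.lit l, eᵢ) ∈ br →
      NatEval NP (hupd Δ x (.lit l)) eᵢ Θ v →
      NatEval NP Γ (.fcase e br) Θ v

/-! ## Embedding restricted FlatCurry into FlatCurry -/

def Exp.toF : Exp → FExpr
  | .var x => .var x
  | .lit l => .lit l
  | .bot => .bot
  | .choice x y => .choice (.var x) (.var y)
  | .free => .ffree [0] (.var 0)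
  | .fapp f xs => .fapp f (xs.map .var)
  | .capp c xs => .capp c (xs.map .var)
  | .papp _ _ => .bot

def Stmt.toF : Stmt → FExpr
  | .slet binds body => .flet (binds.map fun p => (p.1, p.2.toF)) body.toF
  | .ret e => e.toF

def Block.toF : Block → FExpr
  | .scase x br => .fcase (.var x) (br.map fun p => (p.1, p.2.toF))
  | .stmt s => s.toF

/-- The FlatCurry program corresponding to a restricted FlatCurry program. -/
def natProg (P : Program) : NProgram := fun f => (P f).map fun p => (p.1, p.2.toF)

/-! ## Correspondence between graphs and heaps (contraction of forwarding nodes) -/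

/-- `VMap G x y`: following forwarding nodes, node `x` contracts to node `y`. -/
inductive VMap (G : CurryGraph) : Var → Var → Prop
  | step {x z y} : G x = some (.fwd z) → VMap G z y → VMap G x y
  | refl {x} : (∀ z, G x ≠ some (.fwd z)) → VMap G x x

/-- `NodeExpr G x e`: the FlatCurry expression `e` is the contents of node `x`
with all forwarding nodes contracted. -/
inductive NodeExpr (G : CurryGraph) : Var → FExpr → Prop
  | fwd {x y e} : G x = some (.fwd y) → NodeExpr G y e → NodeExpr G x e
  | bot {x} : G x = some .bot → NodeExpr G x .bot
  | lit {x l} : G x = some (.lit l) → NodeExpr G x (.lit l)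
  | free {x} : G x = some .free → NodeExpr G x (.var x)
  | choice {x y z y' z'} : G x = some (.choice y z) → VMap G y y' → VMap G z z' →
      NodeExpr G x (.choice (.var y') (.var z'))
  | fapp {x f ys zs} : G x = some (.fapp f ys) → List.Forall₂ (VMap G) ys zs →
      NodeExpr G x (.fapp f (zs.map .var))
  | capp {x c ys zs} : G x = some (.capp c ys) → List.Forall₂ (VMap G) ys zs →
      NodeExpr G x (.capp c (zs.map .var))

/-- A heap `Γ` corresponds to a graph `G` when it contains the bindings of `G`
with all forwarding nodes contracted. -/
def Corresponds (G : CurryGraph) (Γ : Heap) : Prop :=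
  ∀ x n, G x = some n → ∃ e, Γ x = some e ∧ NodeExpr G x e

/-- `ValCorr G v e`: the FlatCurry expression `e` is the result value `v`
with all forwarding nodes contracted (relative to graph `G`). -/
inductive ValCorr (G : CurryGraph) : GNode → FExpr → Prop
  | bot : ValCorr G .bot .bot
  | lit {l} : ValCorr G (.lit l) (.lit l)
  | capp {c ys zs} : List.Forall₂ (VMap G) ys zs →
      ValCorr G (.capp c ys) (.capp c (zs.map .var))
  | choice {y z y' z'} : VMap G y y' → VMap G z z' →
      ValCorr G (.choice y z) (.choice (.var y') (.var z'))
  | fwd {x e} : NodeExpr G x e → ValCorr G (.fwd x) e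
  | free {x} : G x = some .free → ValCorr G .free (.var x)

/-! ## First-order, fully applied programs -/

def Exp.firstOrder : Exp → Prop
  | .papp _ _ => False
  | _ => True

def Stmt.firstOrder : Stmt → Prop
  | .slet binds body => (∀ p ∈ binds, p.2.firstOrder) ∧ body.firstOrder
  | .ret e => e.firstOrder

def Block.firstOrder : Block → Prop
  | .scase _ br => ∀ p ∈ br, p.2.firstOrder
  | .stmt s => s.firstOrder

def GNode.firstOrder : GNode → Prop
  | .part _ _ _ => False
  | .applyn _ _ => False
  | _ => True

def CurryGraph.firstOrder (G : CurryGraph) : Prop := ∀ x n, G x = some n → n.firstOrder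

def Program.firstOrder (P : Program) : Prop :=
  ∀ f p, P f = some p → Block.firstOrder p.2

/-! Backtracking from `G₂,S₂` first undoes the normalization of `x` (second premise), which
leaves the choice frame `⟨r_?, FWD(y)⟩` on top. Popping it switches `r` to the right
alternative and pushes a deterministic frame that immediately restores `r ↦ ?(x,y)`, giving
back `G₁`. The first premise then undoes the head-normalization of `e`. Backtracking only
rewrites nodes, so the unreachable bindings left over by the inner runs ride along unchanged;
those shadowed by bindings of `G` can be dropped, leaving only new ones. -/

lemma gunion_assoc (G A B : CurryGraph) :
    GUnion (GUnion G A) B = GUnion G (GUnion A B) := by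
  funext z
  simp only [GUnion, Option.or_assoc]

lemma exists_unreachNew_gunion_eq (G H : CurryGraph) :
    ∃ Gu, UnreachNew G Gu ∧ GUnion G H = GUnion G Gu := by
  refine ⟨fun z => if G z = none then H z else none, fun z hz => ?_, ?_⟩
  · by_contra hG
    exact hz (if_neg hG)
  · funext z
    cases hG : G z <;> simp [GUnion, hG]

lemma gupd_gunion (G Gu : CurryGraph) (x : Var) (n : GNode) :
    gupd (GUnion G Gu) x n = GUnion (gupd G x n) Gu := by
  funext z
  by_cases h : z = x
  · subst h
    simp [gupd, GUnion]
  · simp [gupd, GUnion, Function.update_of_ne h]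

namespace BStepN

lemma trans {m n : ℕ} {G S G' S' G'' S''} (h₁ : BStepN m G S G' S')
    (h₂ : BStepN n G' S' G'' S'') : BStepN (m + n) G S G'' S'' := by
  induction m generalizing G S with
  | zero =>
    obtain ⟨rfl, rfl⟩ := h₁
    simpa using h₂
  | succ m ih =>
    obtain ⟨G₁, S₁, hstep, hrest⟩ := h₁
    rw [Nat.add_right_comm]
    exact ⟨G₁, S₁, hstep, ih hrest⟩

lemma gunion {n : ℕ} {G S G' S'} (Gu : CurryGraph) (h : BStepN n G S G' S') :
    BStepN n (GUnion G Gu) S (GUnion G' Gu) S' := by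
  induction n generalizing G S with
  | zero =>
    obtain ⟨rfl, rfl⟩ := h
    exact ⟨rfl, rfl⟩
  | succ n ih =>
    obtain ⟨G₁, S₁, hstep, hrest⟩ := h
    refine ⟨GUnion G₁ Gu, S₁, ?_, ih hrest⟩
    cases hstep with
    | det => rw [← gupd_gunion]; exact BStep.det
    | choice hx => rw [← gupd_gunion]; exact BStep.choice (by simp [GUnion, hx])

lemma restore_choice {G : CurryGraph} {S : Stack} {r x y : Var}
    (hr : G r = some (.choice x y)) :
    BStepN 2 (gupd G r (.fwd x)) (⟨r, .fwd y, true⟩ :: S) G S := by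
  have hrestored : gupd (gupd (gupd G r (.fwd x)) r (.fwd y)) r (.choice x y) = G := by
    simp only [gupd, Function.update_idem]
    exact Function.update_eq_self_iff.mpr hr.symm
  have hleft : gupd G r (.fwd x) r = some (.fwd x) := by simp [gupd]
  exact ⟨_, _, BStep.choice hleft, _, _, BStep.det, hrestored.symm, rfl⟩

end BStepN

/-- **(Norm-Choice) case of the backtracking theorem.**
Suppose (Norm-Choice) is applied with root `r` of the expression `e`:
`G,S : e ⇓ G₁,S₁ : ?(x,y)` (with `r` bound to the choice) and
`G₁[r↦FWD(x)], ⟨r_?, FWD(y) | S₁⟩ : x ⇓_N G₂,S₂ : v`.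
If backtracking restores each premise up to unreachable new bindings, then
there is an `n` with `G₂,S₂ ⇓_B^n G ∪ Gu, S` for a set `Gu` of new bindings
created during the evaluation. -/
theorem backtracking_normChoice
    (P : Program) (G G₁ G₂ : CurryGraph) (S S₁ S₂ : Stack) (e : Exp)
    (x y r : Var) (v : NVal)
    (h₁ : EvalE P G S e G₁ S₁ (.choice x y))
    (hr : G₁ r = some (.choice x y))
    (h₂ : NormVar P (gupd G₁ r (.fwd x)) (⟨r, .fwd y, true⟩ :: S₁) x G₂ S₂ v)
    (hrest₂ : ∃ (n₂ : ℕ) (Gu₂ : CurryGraph), UnreachNew (gupd G₁ r (.fwd x)) Gu₂ ∧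
      BStepN n₂ G₂ S₂ (GUnion (gupd G₁ r (.fwd x)) Gu₂) (⟨r, .fwd y, true⟩ :: S₁))
    (hrest₁ : ∃ (n₁ : ℕ) (Gu₁ : CurryGraph), UnreachNew G Gu₁ ∧
      BStepN n₁ G₁ S₁ (GUnion G Gu₁) S) :
    ∃ (n : ℕ) (Gu : CurryGraph), UnreachNew G Gu ∧
      BStepN n G₂ S₂ (GUnion G Gu) S := by
  obtain ⟨n₂, Gu₂, -, hundo₂⟩ := hrest₂
  obtain ⟨n₁, Gu₁, -, hundo₁⟩ := hrest₁
  obtain ⟨Gu, hGu, hunion⟩ := exists_unreachNew_gunion_eq G (GUnion Gu₁ Gu₂)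
  refine ⟨n₂ + (2 + n₁), Gu, hGu, ?_⟩
  rw [← hunion, ← gunion_assoc]
  exact hundo₂.trans (((BStepN.restore_choice hr).gunion Gu₂).trans (hundo₁.gunion Gu₂))
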